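/- There exists an absolute constant A > 0 such that for every injective map τ : D → D with inverse σ = τ^{−1} : τ(D) → D, one has ‖S_σ‖_{BMO}² ≤ A · C₁. -/

import Mathlib

open MeasureTheory Set
open scoped ENNReal NNReal Classical

noncomputable section

/-- A dyadic subinterval of `[0,1)`: the half-open interval
`[k/2^n, (k+1)/2^n)` with `k < 2^n`. -/
structure DyadicI where
  n : ℕ
  k : ℕ
  hk : k < 2 ^ n

instance : Nonempty DyadicI := ⟨⟨0, 0, by norm_num⟩⟩

namespace DyadicI

/-- The length `|I| = 2^{-n}` of a dyadic interval. -/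
def len (I : DyadicI) : ℝ := (2 : ℝ) ^ (-(I.n : ℤ))

/-- The left endpoint `k 2^{-n}` of a dyadic interval. -/
def lep (I : DyadicI) : ℝ := (I.k : ℝ) * I.len

/-- The underlying point set `[k/2^n, (k+1)/2^n)` of a dyadic interval. -/
def toSet (I : DyadicI) : Set ℝ := Set.Ico I.lep (I.lep + I.len)

/-- The `L^∞`-normalized Haar function `h_I`: `1` on the left half of `I`,
`-1` on the right half of `I`, `0` off `I`. -/
def haar (I : DyadicI) (t : ℝ) : ℝ :=
  if t ∈ Set.Ico I.lep (I.lep + I.len / 2) then 1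
  else if t ∈ Set.Ico (I.lep + I.len / 2) (I.lep + I.len) then -1
  else 0

end DyadicI

open DyadicI

section Defs

variable {X : Type*} [NormedAddCommGroup X] [NormedSpace ℝ X]

/-- The square function `𝕊(f)` of the `X`-valued Haar expansion `f = ∑_{I ∈ s} x_I h_I`:
`𝕊(f)(t) = (E_ε ‖∑_I ε_I x_I h_I(t)‖²)^{1/2}`, the average being taken over all
choices of signs `ε_I ∈ {±1}`, `I ∈ s`. -/
def sqFn (s : Finset DyadicI) (x : DyadicI → X) (t : ℝ) : ℝ :=
  Real.sqrt ((∑ ε : {I // I ∈ s} → Bool,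
    ‖∑ I ∈ s.attach, ((if ε I then (1 : ℝ) else -1) * haar I.1 t) • x I.1‖ ^ 2) /
      2 ^ s.card)

/-- The `H^p_X` (quasi-)norm of `f = ∑_{I ∈ s} x_I h_I`:
`‖f‖ = (∫₀¹ 𝕊(f)(t)^p dt)^{1/p}`. -/
def HpNormV (p : ℝ) (s : Finset DyadicI) (x : DyadicI → X) : ℝ :=
  (∫ t in Set.Icc (0 : ℝ) 1, sqFn s x t ^ p) ^ (1 / p)

/-- The coefficients of `(T_{τ,p} ⊗ Id_X)(f)` for `f = ∑_{I ∈ s} x_I h_I`, namely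
`(T_{τ,p} ⊗ Id_X)(f) = ∑_{I ∈ s} (|I|/|τ(I)|)^{1/p} x_I h_{τ(I)}`, as a family of
coefficients indexed by the Haar support `τ(s)`. -/
def rearrCoef (τ : DyadicI → DyadicI) (p : ℝ) (s : Finset DyadicI) (x : DyadicI → X) :
    DyadicI → X :=
  fun J => ∑ I ∈ s, if τ I = J then ((len I / len (τ I)) ^ (1 / p)) • x I else 0

/-- The scalar dyadic square function `S(f) = (∑_I a_I² 1_I)^{1/2}`
of `f = ∑_{I ∈ s} a_I h_I`. -/
def sqFnS (s : Finset DyadicI) (a : DyadicI → ℝ) (t : ℝ) : ℝ :=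
  Real.sqrt (∑ I ∈ s, a I ^ 2 * Set.indicator (toSet I) (fun _ => (1 : ℝ)) t)

/-- The scalar dyadic `H^p` (quasi-)norm `‖f‖_{H^p} = ‖S(f)‖_{L^p[0,1]}`. -/
def HpNormS (p : ℝ) (s : Finset DyadicI) (a : DyadicI → ℝ) : ℝ :=
  (∫ t in Set.Icc (0 : ℝ) 1, sqFnS s a t ^ p) ^ (1 / p)

/-- The coefficients of the scalar rearrangement operator `T_{τ,p}` applied to
`f = ∑_{I ∈ s} a_I h_I`; `T_{τ,p}` is determined by
`T_{τ,p}(h_I/|I|^{1/p}) = h_{τ(I)}/|τ(I)|^{1/p}`. -/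
def rearrCoefS (τ : DyadicI → DyadicI) (p : ℝ) (s : Finset DyadicI) (a : DyadicI → ℝ) :
    DyadicI → ℝ :=
  fun J => ∑ I ∈ s, if τ I = J then ((len I / len (τ I)) ^ (1 / p)) * a I else 0

/-- The operator norm `‖T_{τ,p} ⊗ Id_X : H^p_X → H^p_X‖ ∈ [0,∞]`, computed as the
supremum over finitely supported `f` in the unit ball of `H^p_X`. -/
def hpOpNorm (τ : DyadicI → DyadicI) (p : ℝ) (X : Type*) [NormedAddCommGroup X]
    [NormedSpace ℝ X] : ℝ≥0∞ :=
  ⨆ (s : Finset DyadicI) (x : DyadicI → X) (_ : HpNormV p s x ≤ 1),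
    ENNReal.ofReal (HpNormV p (s.image τ) (rearrCoef τ p s x))

/-- The scalar operator norm `‖T_{τ,p} : H^p → H^p‖ ∈ [0,∞]`. -/
def hpOpNormS (τ : DyadicI → DyadicI) (p : ℝ) : ℝ≥0∞ :=
  ⨆ (s : Finset DyadicI) (a : DyadicI → ℝ) (_ : HpNormS p s a ≤ 1),
    ENNReal.ofReal (HpNormS p (s.image τ) (rearrCoefS τ p s a))

/-- For `H = τ(L)` (so that `σ(J) = I` for `J = τ(I)`, `I ∈ L`), the maximal function
`μ_H(t) = sup_{J ∈ H} (|σ(J)|/|J|) 1_J(t) = sup_{I ∈ L} (|I|/|τ(I)|) 1_{τ(I)}(t)`,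
as an `[0,∞]`-valued function. -/
def muSet (τ : DyadicI → DyadicI) (L : Set DyadicI) (t : ℝ) : ℝ≥0∞ :=
  ⨆ (I : DyadicI) (_ : I ∈ L),
    ENNReal.ofReal (len I / len (τ I) * Set.indicator (toSet (τ I)) (fun _ => (1 : ℝ)) t)

/-- For `H = τ(L)` with `L` finite, the (real-valued) maximal function
`μ_H(t) = max_{I ∈ L} (|I|/|τ(I)|) 1_{τ(I)}(t)`. -/
def muFin (τ : DyadicI → DyadicI) (L : Finset DyadicI) (t : ℝ) : ℝ :=
  ((L.sup fun I =>
    Real.toNNReal (len I / len (τ I) * Set.indicator (toSet (τ I)) (fun _ => (1 : ℝ)) t) : ℝ≥0) : ℝ)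

/-- The point set `L* = ⋃_{I ∈ L} I` covered by a collection of dyadic intervals. -/
def pointSet (L : Set DyadicI) : Set ℝ := ⋃ I ∈ L, toSet I

/-- The constant `C₁ = sup_{H ⊆ τ(D), H ≠ ∅} (1/|σ(H)*|) ∫₀¹ μ_H(t) dt`, where
nonempty collections `H ⊆ τ(D)` are parametrized as `H = τ(L)` for nonempty `L ⊆ D`,
so that `σ(H)* = L*`. -/
def Cone (τ : DyadicI → DyadicI) : ℝ≥0∞ :=
  ⨆ (L : Set DyadicI) (_ : L.Nonempty),
    (∫⁻ t in Set.Icc (0 : ℝ) 1, muSet τ L t) / volume (pointSet L)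

/-- The square of the dyadic BMO norm of `g = ∑_{J ∈ s} a_J h_J`:
`‖g‖_{BMO}² = sup_{I ∈ D} (1/|I|) ∑_{J ⊆ I} a_J² |J|`. -/
def bmoSq (s : Finset DyadicI) (a : DyadicI → ℝ) : ℝ≥0∞ :=
  ⨆ I : DyadicI, ENNReal.ofReal
    ((∑ J ∈ s.filter fun J => toSet J ⊆ toSet I, a J ^ 2 * len J) / len I)

/-- The coefficients of `S_σ(g)` for `g = ∑_{J ∈ s} a_J h_J`, where `σ = τ⁻¹` on `τ(D)`:
`S_σ(h_J) = h_{σ(J)}` for `J ∈ τ(D)` and `S_σ(h_J) = 0` otherwise, so that the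
coefficient of `h_K` in `S_σ(g)` is `a_{τ(K)}` if `τ(K) ∈ s`, and `0` otherwise. -/
def sSigmaCoef (τ : DyadicI → DyadicI) (s : Finset DyadicI) (a : DyadicI → ℝ) :
    DyadicI → ℝ :=
  fun K => if τ K ∈ s then a (τ K) else 0

/-- The Haar support of `S_σ(g)` for `g` with Haar support `s`:
`σ(s ∩ τ(D))`, i.e. the preimage under `τ` of `s`. -/
def sSigmaSupp (τ : DyadicI → DyadicI) (s : Finset DyadicI) : Finset DyadicI :=
  (s.filter fun J => J ∈ Set.range τ).image (Function.invFun τ)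

/-- The operator norm `‖S_σ‖_{BMO} ∈ [0,∞]` of `S_σ` with respect to the dyadic BMO
norm, computed over finitely supported Haar expansions. -/
def bmoOpNorm (τ : DyadicI → DyadicI) : ℝ≥0∞ :=
  ⨆ (s : Finset DyadicI) (a : DyadicI → ℝ) (_ : bmoSq s a ≤ 1),
    (bmoSq (sSigmaSupp τ s) (sSigmaCoef τ s a)) ^ (1 / 2 : ℝ)

/-- The Carleson constant `⟦C⟧ = sup_{I ∈ C} (1/|I|) ∑_{J ∈ C, J ⊆ I} |J| ∈ [0,∞]`
of a collection of dyadic intervals. -/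
def carleson (C : Set DyadicI) : ℝ≥0∞ :=
  ⨆ (I : DyadicI) (_ : I ∈ C),
    (∑' J : {J : DyadicI // J ∈ C ∧ toSet J ⊆ toSet I}, ENNReal.ofReal (len J.1)) /
      ENNReal.ofReal (len I)

/-- The `L^p_X = L^p([0,1]; X)` (Bochner) norm of `f = ∑_{I ∈ s} x_I h_I`. -/
def LpNormV (p : ℝ) (s : Finset DyadicI) (x : DyadicI → X) : ℝ :=
  (∫ t in Set.Icc (0 : ℝ) 1, ‖∑ I ∈ s, haar I t • x I‖ ^ p) ^ (1 / p)

/-- The operator norm `‖T_{τ,p} ⊗ Id_X : L^p_X → L^p_X‖ ∈ [0,∞]`, computed over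
finitely supported Haar expansions. -/
def lpOpNorm (τ : DyadicI → DyadicI) (p : ℝ) (X : Type*) [NormedAddCommGroup X]
    [NormedSpace ℝ X] : ℝ≥0∞ :=
  ⨆ (s : Finset DyadicI) (x : DyadicI → X) (_ : LpNormV p s x ≤ 1),
    ENNReal.ofReal (LpNormV p (s.image τ) (rearrCoef τ p s x))

/-- The operator norm `‖T_{τ,p}^{-1} ⊗ Id_X‖ ∈ [0,∞]` on the span of
`{h_J : J ∈ τ(D)}` with the `L^p_X` norm: the map determined by
`x h_{τ(I)}/|τ(I)|^{1/p} ↦ x h_I/|I|^{1/p}`, i.e. sending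
`g = ∑_{I ∈ L} x_I h_{τ(I)}` to `∑_{I ∈ L} (|τ(I)|/|I|)^{1/p} x_I h_I`. -/
def lpInvOpNorm (τ : DyadicI → DyadicI) (p : ℝ) (X : Type*) [NormedAddCommGroup X]
    [NormedSpace ℝ X] : ℝ≥0∞ :=
  ⨆ (L : Finset DyadicI) (x : DyadicI → X)
    (_ : LpNormV p (L.image τ) (fun J => ∑ I ∈ L, if τ I = J then x I else 0) ≤ 1),
    ENNReal.ofReal (LpNormV p L fun I => ((len (τ I) / len I) ^ (1 / p)) • x I)

/-- The operator norm `‖T_{τ,1}^{-1}‖₁ ∈ [0,∞]` on the span of `{h_J : J ∈ τ(D)}`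
with the dyadic `H¹` norm: the map determined by `h_{τ(I)}/|τ(I)| ↦ h_I/|I|`,
i.e. sending `g = ∑_{I ∈ L} a_I h_{τ(I)}` to `∑_{I ∈ L} (|τ(I)|/|I|) a_I h_I`. -/
def h1InvOpNorm (τ : DyadicI → DyadicI) : ℝ≥0∞ :=
  ⨆ (L : Finset DyadicI) (a : DyadicI → ℝ)
    (_ : HpNormS 1 (L.image τ) (fun J => ∑ I ∈ L, if τ I = J then a I else 0) ≤ 1),
    ENNReal.ofReal (HpNormS 1 L fun I => (len (τ I) / len I) * a I)

/-- The Rademacher average `(E_ε ‖∑_{i<n} ε_i a_i‖^p)^{1/p}` over all choices of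
signs `ε_i ∈ {±1}`. -/
def radAvg (p : ℝ) {Y : Type*} [NormedAddCommGroup Y] [NormedSpace ℝ Y] (n : ℕ)
    (a : Fin n → Y) : ℝ :=
  ((∑ ε : Fin n → Bool, ‖∑ i, (if ε i then (1 : ℝ) else -1) • a i‖ ^ p) / 2 ^ n) ^ (1 / p)

/-- The type-`p` constant `Type_p(Y) ∈ [0,∞]`: the least `C` such that
`(E_ε ‖∑ ε_i a_i‖^p)^{1/p} ≤ C (∑ ‖a_i‖^p)^{1/p}` for all finite families in `Y`. -/
def typeConst (p : ℝ) (Y : Type*) [NormedAddCommGroup Y] [NormedSpace ℝ Y] : ℝ≥0∞ :=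
  sInf {C : ℝ≥0∞ | ∀ (n : ℕ) (a : Fin n → Y),
    ENNReal.ofReal (radAvg p n a) ≤ C * ENNReal.ofReal ((∑ i, ‖a i‖ ^ p) ^ (1 / p))}

/-- The UMD property of a Banach space `E`: for each `1 < r < ∞` the Haar system is
unconditional in `L^r_E`. -/
def IsUMD (E : Type*) [NormedAddCommGroup E] [NormedSpace ℝ E] : Prop :=
  ∀ r : ℝ, 1 < r → ∃ β : ℝ, ∀ (s : Finset DyadicI) (x : DyadicI → E) (ε : DyadicI → ℝ),
    (∀ I, ε I = 1 ∨ ε I = -1) →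
    LpNormV r s (fun I => ε I • x I) ≤ β * LpNormV r s x

/-- `B` is a block in `L` with top `I`: `B ⊆ L`, `I` is the unique maximal interval
of `B`, and `B` is order-convex in `L` between its elements and `I`. -/
def IsBlock (L : Set DyadicI) (B : Set DyadicI) (I : DyadicI) : Prop :=
  B ⊆ L ∧ I ∈ B ∧ (∀ J ∈ B, toSet J ⊆ toSet I) ∧
    ∀ J ∈ B, ∀ K ∈ L, toSet J ⊆ toSet K → toSet K ⊆ toSet I → K ∈ B

/-- `G₁(K | E)`: the maximal dyadic intervals of `E` strictly contained in `K`. -/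
def gen1 (K : DyadicI) (E : Set DyadicI) : Set DyadicI :=
  {J | J ∈ E ∧ toSet J ⊂ toSet K ∧
    ∀ J' ∈ E, toSet J' ⊂ toSet K → toSet J ⊆ toSet J' → J' = J}

end Defs

/-! Fix a dyadic `K` and let `L` be the intervals `I ⊆ K` with `τ(I)` in the support of `g`;
put `H = τ(L)`. Group `L` by the stretch factor `|I| / |τ(I)| = 2 ^ j`. On level `j`,
`∑ a_{τ(I)}² |I| = 2 ^ j ∑ a_{τ(I)}² |τ(I)| ≤ 2 ^ j |⋃ τ(I)|` by the packing estimate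
`∑_{J ∈ F} a_J² |J| ≤ |⋃ F|` that `‖g‖_{BMO} ≤ 1` gives for every finite `F` (split `F` along
its maximal intervals), and `⋃ τ(I) ⊆ {μ_H ≥ 2 ^ j}`. Since
`∑_j 2 ^ j 1_{μ_H ≥ 2 ^ j} ≤ 2 μ_H`, the BMO sum over `K` is at most
`2 ∫ μ_H ≤ 2 C₁ |L*| ≤ 2 C₁ |K|`, so `A = 2` works. -/

namespace DyadicI

lemma len_pos (I : DyadicI) : 0 < I.len := zpow_pos two_pos _

lemma len_eq_zpow_mul_len (I J : DyadicI) : I.len = 2 ^ ((J.n : ℤ) - I.n) * J.len := by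
  rw [len, len, ← zpow_add₀ two_ne_zero]
  ring_nf

lemma len_div_len (I J : DyadicI) : I.len / J.len = 2 ^ ((J.n : ℤ) - I.n) := by
  rw [len_eq_zpow_mul_len I J, mul_div_cancel_right₀ _ J.len_pos.ne']

lemma mem_toSet_iff {I : DyadicI} {t : ℝ} : t ∈ I.toSet ↔ 0 ≤ t ∧ ⌊t / I.len⌋₊ = I.k := by
  have hℓ := I.len_pos
  simp only [toSet, lep, Set.mem_Ico]
  constructor
  · rintro ⟨h₁, h₂⟩
    have ht : 0 ≤ t := (mul_nonneg (Nat.cast_nonneg _) hℓ.le).trans h₁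
    refine ⟨ht, (Nat.floor_eq_iff (div_nonneg ht hℓ.le)).2 ⟨?_, ?_⟩⟩
    · rwa [le_div_iff₀ hℓ]
    · rw [div_lt_iff₀ hℓ]; linarith
  · rintro ⟨ht, hk⟩
    obtain ⟨h₁, h₂⟩ := (Nat.floor_eq_iff (div_nonneg ht hℓ.le)).1 hk
    rw [le_div_iff₀ hℓ] at h₁
    rw [div_lt_iff₀ hℓ] at h₂
    exact ⟨h₁, by linarith⟩

lemma toSet_subset_Icc (I : DyadicI) : I.toSet ⊆ Set.Icc 0 1 := by
  intro t ht
  have hk : (I.k : ℝ) + 1 ≤ 2 ^ I.n := by exact_mod_cast I.hk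
  have hℓ : (2 : ℝ) ^ I.n * I.len = 1 := by
    rw [len, zpow_neg, zpow_natCast, mul_inv_cancel₀ (by positivity)]
  obtain ⟨h₁, h₂⟩ := ht
  refine ⟨(mul_nonneg (Nat.cast_nonneg _) I.len_pos.le).trans h₁, ?_⟩
  nlinarith [I.len_pos, show I.lep = I.k * I.len from rfl]

lemma measurableSet_toSet (I : DyadicI) : MeasurableSet I.toSet := measurableSet_Ico

lemma volume_toSet (I : DyadicI) : volume I.toSet = ENNReal.ofReal I.len := by
  simp [toSet, Real.volume_Ico]

lemma floor_div_len_of_n_le {I J : DyadicI} (h : J.n ≤ I.n) (t : ℝ) :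
    ⌊t / J.len⌋₊ = ⌊t / I.len⌋₊ / 2 ^ (I.n - J.n) := by
  have hJ : J.len = ((2 ^ (I.n - J.n) : ℕ) : ℝ) * I.len := by
    rw [len_eq_zpow_mul_len J I, Nat.cast_pow, Nat.cast_ofNat, ← zpow_natCast,
      Nat.cast_sub h]
  rw [← Nat.floor_div_natCast, hJ, div_div, mul_comm]

lemma toSet_subset_of_n_le {I J : DyadicI} (h : J.n ≤ I.n)
    (hIJ : ¬Disjoint I.toSet J.toSet) : I.toSet ⊆ J.toSet := by
  obtain ⟨t, htI, htJ⟩ := Set.not_disjoint_iff.1 hIJ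
  rw [mem_toSet_iff] at htI htJ
  intro u hu
  rw [mem_toSet_iff] at hu ⊢
  refine ⟨hu.1, ?_⟩
  rw [floor_div_len_of_n_le h, hu.2, ← htJ.2, floor_div_len_of_n_le h, htI.2]


theorem sum_le_volume_biUnion (w : DyadicI → ℝ≥0∞) (F : Finset DyadicI)
    (hF : ∀ I ∈ F, ∑ J ∈ F.filter (fun J => J.toSet ⊆ I.toSet), w J ≤ volume I.toSet) :
    ∑ J ∈ F, w J ≤ volume (⋃ J ∈ F, J.toSet) := by
  induction F using Finset.strongInduction with
  | _ F ih =>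
    rcases F.eq_empty_or_nonempty with rfl | hne
    · simp
    -- an interval of the coarsest level contains or avoids every other interval of `F`
    obtain ⟨J₀, hJ₀, hmin⟩ := F.exists_min_image n hne
    set F₂ := F.filter (fun J => ¬J.toSet ⊆ J₀.toSet)
    have hF₂ : F₂ ⊂ F :=
      Finset.filter_ssubset.2 ⟨J₀, hJ₀, not_not.2 subset_rfl⟩
    have hdisj : Disjoint J₀.toSet (⋃ J ∈ F₂, J.toSet) := by
      refine Set.disjoint_iUnion₂_right.2 fun J hJ => ?_
      rw [Finset.mem_filter] at hJ
      by_contra h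
      exact hJ.2 (toSet_subset_of_n_le (hmin J hJ.1) fun h' => h h'.symm)
    have ih₂ : ∑ J ∈ F₂, w J ≤ volume (⋃ J ∈ F₂, J.toSet) := by
      refine ih F₂ hF₂ fun I hI => le_trans ?_ (hF I (Finset.filter_subset _ _ hI))
      exact Finset.sum_le_sum_of_subset (Finset.filter_subset_filter _ hF₂.subset)
    calc ∑ J ∈ F, w J
        = ∑ J ∈ F.filter (fun J => J.toSet ⊆ J₀.toSet), w J + ∑ J ∈ F₂, w J :=
          (Finset.sum_filter_add_sum_filter_not F _ _).symm
      _ ≤ volume J₀.toSet + volume (⋃ J ∈ F₂, J.toSet) := add_le_add (hF J₀ hJ₀) ih₂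
      _ = volume (J₀.toSet ∪ ⋃ J ∈ F₂, J.toSet) :=
          (measure_union hdisj (F₂.measurableSet_biUnion fun J _ => J.measurableSet_toSet)).symm
      _ ≤ volume (⋃ J ∈ F, J.toSet) := by
          refine measure_mono (Set.union_subset (Set.subset_biUnion_of_mem hJ₀) ?_)
          exact Set.biUnion_subset_biUnion_left (Finset.coe_subset.2 hF₂.subset)

end DyadicI

section BMO

variable {s : Finset DyadicI} {a : DyadicI → ℝ}

lemma sum_filter_subset_le_volume_of_bmoSq_le_one (h : bmoSq s a ≤ 1) (I : DyadicI) :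
    ∑ J ∈ s.filter (fun J => J.toSet ⊆ I.toSet), ENNReal.ofReal (a J ^ 2 * J.len) ≤
      volume I.toSet := by
  have hI := (le_iSup (fun I : DyadicI => ENNReal.ofReal
    ((∑ J ∈ s.filter fun J => toSet J ⊆ toSet I, a J ^ 2 * len J) / len I)) I).trans h
  rw [ENNReal.ofReal_le_one, div_le_one I.len_pos] at hI
  rw [← ENNReal.ofReal_sum_of_nonneg fun J _ => mul_nonneg (sq_nonneg _) J.len_pos.le,
    volume_toSet]
  exact ENNReal.ofReal_le_ofReal hI

lemma sum_le_volume_biUnion_of_bmoSq_le_one (h : bmoSq s a ≤ 1) {F : Finset DyadicI}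
    (hF : F ⊆ s) :
    ∑ J ∈ F, ENNReal.ofReal (a J ^ 2 * J.len) ≤ volume (⋃ J ∈ F, J.toSet) :=
  sum_le_volume_biUnion _ F fun I _ => le_trans
    (Finset.sum_le_sum_of_subset (Finset.filter_subset_filter _ hF))
    (sum_filter_subset_le_volume_of_bmoSq_le_one h I)

end BMO

lemma sum_zpow_two_le_of_forall_lt (T : Finset ℤ) (m : ℤ) (hm : ∀ j ∈ T, j < m) :
    ∑ j ∈ T, (2 : ℝ) ^ j ≤ 2 ^ m := by
  induction T using Finset.induction_on_max generalizing m with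
  | empty => simp only [Finset.sum_empty]; positivity
  | insert i T hT ih =>
    have him : i < m := hm i (Finset.mem_insert_self i T)
    calc ∑ j ∈ insert i T, (2 : ℝ) ^ j
        = 2 ^ i + ∑ j ∈ T, (2 : ℝ) ^ j :=
          Finset.sum_insert fun hi => lt_irrefl i (hT i hi)
      _ ≤ 2 ^ i + 2 ^ i := add_le_add_right (ih i hT) _
      _ = 2 ^ (i + 1) := by rw [zpow_add_one₀ two_ne_zero]; ring
      _ ≤ 2 ^ m := zpow_le_zpow_right₀ one_le_two him

lemma sum_indicator_zpow_two_le {T : Finset ℤ} {E : ℤ → Set ℝ} {t : ℝ} {x : ℝ≥0∞}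
    (hx : ∀ j ∈ T, t ∈ E j → ENNReal.ofReal (2 ^ j) ≤ x) :
    ∑ j ∈ T, (E j).indicator (fun _ => ENNReal.ofReal (2 ^ j)) t ≤ 2 * x := by
  simp only [Set.indicator_apply]
  rw [← Finset.sum_filter]
  set T' := T.filter (fun j => t ∈ E j)
  rcases T'.eq_empty_or_nonempty with hT' | hT'
  · simp [hT']
  obtain ⟨hmaxT, hmaxE⟩ := Finset.mem_filter.1 (T'.max'_mem hT')
  calc ∑ j ∈ T', ENNReal.ofReal (2 ^ j)
      = ENNReal.ofReal (∑ j ∈ T', 2 ^ j) :=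
        (ENNReal.ofReal_sum_of_nonneg fun j _ => (zpow_pos two_pos j).le).symm
    _ ≤ ENNReal.ofReal (2 * 2 ^ T'.max' hT') := by
        refine ENNReal.ofReal_le_ofReal ?_
        rw [← zpow_one_add₀ two_ne_zero, add_comm]
        exact sum_zpow_two_le_of_forall_lt T' _ fun j hj => Int.lt_add_one_iff.2 (T'.le_max' j hj)
    _ = 2 * ENNReal.ofReal (2 ^ T'.max' hT') := by
        rw [ENNReal.ofReal_mul zero_le_two, ENNReal.ofReal_ofNat]
    _ ≤ 2 * x := mul_le_mul_right (hx _ hmaxT hmaxE) 2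

section MaximalFunction

variable {τ : DyadicI → DyadicI}

lemma ofReal_len_div_len_le_muSet {L : Set DyadicI} {I : DyadicI} (hI : I ∈ L) {t : ℝ}
    (ht : t ∈ (τ I).toSet) : ENNReal.ofReal (I.len / (τ I).len) ≤ muSet τ L t := by
  have h := le_iSup₂ (f := fun (I : DyadicI) (_ : I ∈ L) => ENNReal.ofReal
    (len I / len (τ I) * (toSet (τ I)).indicator (fun _ => (1 : ℝ)) t)) I hI
  rwa [Set.indicator_of_mem ht, mul_one] at h

lemma volume_pointSet_le_one (L : Set DyadicI) : volume (pointSet L) ≤ 1 := by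
  calc volume (pointSet L) ≤ volume (Set.Icc (0 : ℝ) 1) :=
        measure_mono (Set.iUnion₂_subset fun I _ => I.toSet_subset_Icc)
    _ = 1 := by simp

lemma lintegral_muSet_le_cone_mul (τ : DyadicI → DyadicI) (L : Set DyadicI) :
    ∫⁻ t in Set.Icc (0 : ℝ) 1, muSet τ L t ≤ Cone τ * volume (pointSet L) := by
  rcases L.eq_empty_or_nonempty with rfl | ⟨I, hI⟩
  · simp [muSet]
  have hpos : volume (pointSet L) ≠ 0 := by
    refine (lt_of_lt_of_le ?_ (measure_mono (Set.subset_biUnion_of_mem hI))).ne'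
    simpa [volume_toSet] using I.len_pos
  refine (ENNReal.div_le_iff hpos (ne_top_of_le_ne_top ENNReal.one_ne_top
    (volume_pointSet_le_one L))).1 ?_
  exact le_iSup₂ (f := fun (L : Set DyadicI) (_ : L.Nonempty) =>
    (∫⁻ t in Set.Icc (0 : ℝ) 1, muSet τ L t) / volume (pointSet L)) L ⟨I, hI⟩

end MaximalFunction

section Rearrangement

variable {τ : DyadicI → DyadicI} {s : Finset DyadicI} {a : DyadicI → ℝ}

lemma mem_sSigmaSupp (hτ : Function.Injective τ) {I : DyadicI} :
    I ∈ sSigmaSupp τ s ↔ τ I ∈ s := by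
  simp only [sSigmaSupp, Finset.mem_image, Finset.mem_filter, Set.mem_range]
  constructor
  · rintro ⟨_, ⟨hJ, I', rfl⟩, rfl⟩
    rwa [Function.leftInverse_invFun hτ I']
  · exact fun h => ⟨τ I, ⟨h, I, rfl⟩, Function.leftInverse_invFun hτ I⟩

lemma sum_le_zpow_mul_volume_of_level (hτ : Function.Injective τ) (h : bmoSq s a ≤ 1)
    {L : Finset DyadicI} (hL : ∀ I ∈ L, τ I ∈ s) {j : ℤ}
    (hj : ∀ I ∈ L, ((τ I).n : ℤ) - I.n = j) :
    ∑ I ∈ L, ENNReal.ofReal (a (τ I) ^ 2 * I.len) ≤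
      ENNReal.ofReal (2 ^ j) * volume (⋃ I ∈ L, (τ I).toSet) := by
  have hterm : ∀ I ∈ L, ENNReal.ofReal (a (τ I) ^ 2 * I.len) =
      ENNReal.ofReal (2 ^ j) * ENNReal.ofReal (a (τ I) ^ 2 * (τ I).len) := by
    intro I hI
    rw [← ENNReal.ofReal_mul (zpow_pos two_pos j).le, len_eq_zpow_mul_len I (τ I), hj I hI]
    ring_nf
  rw [Finset.sum_congr rfl hterm, ← Finset.mul_sum]
  refine mul_le_mul_right ?_ _
  rw [← Finset.sum_image (f := fun J => ENNReal.ofReal (a J ^ 2 * J.len)) hτ.injOn,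
    ← Finset.set_biUnion_finset_image]
  refine sum_le_volume_biUnion_of_bmoSq_le_one h fun J hJ => ?_
  obtain ⟨I, hI, rfl⟩ := Finset.mem_image.1 hJ
  exact hL I hI

theorem sum_le_two_mul_lintegral_muSet (hτ : Function.Injective τ) (h : bmoSq s a ≤ 1)
    {L : Finset DyadicI} (hL : ∀ I ∈ L, τ I ∈ s) :
    ∑ I ∈ L, ENNReal.ofReal (a (τ I) ^ 2 * I.len) ≤
      2 * ∫⁻ t in Set.Icc (0 : ℝ) 1, muSet τ L t := by
  set lvl : DyadicI → ℤ := fun I => ((τ I).n : ℤ) - I.n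
  set Lj : ℤ → Finset DyadicI := fun j => L.filter (fun I => lvl I = j)
  set E : ℤ → Set ℝ := fun j => ⋃ I ∈ Lj j, (τ I).toSet
  have hEmeas : ∀ j, MeasurableSet (E j) :=
    fun j => (Lj j).measurableSet_biUnion fun I _ => (τ I).measurableSet_toSet
  have hE : ∀ j, E j ⊆ Set.Icc 0 1 :=
    fun j => Set.iUnion₂_subset fun I _ => (τ I).toSet_subset_Icc
  have hlayer : ∀ t, ∑ j ∈ L.image lvl, (E j).indicator (fun _ => ENNReal.ofReal (2 ^ j)) t ≤
      2 * muSet τ L t := by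
    refine fun t => sum_indicator_zpow_two_le fun j _ ht => ?_
    obtain ⟨I, hI, htI⟩ := Set.mem_iUnion₂.1 ht
    obtain ⟨hIL, rfl⟩ := Finset.mem_filter.1 hI
    simpa only [lvl, ← len_div_len] using ofReal_len_div_len_le_muSet (Finset.mem_coe.2 hIL) htI
  calc ∑ I ∈ L, ENNReal.ofReal (a (τ I) ^ 2 * I.len)
      = ∑ j ∈ L.image lvl, ∑ I ∈ Lj j, ENNReal.ofReal (a (τ I) ^ 2 * I.len) :=
        (Finset.sum_fiberwise_of_maps_to (fun I hI => Finset.mem_image_of_mem lvl hI) _).symm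
    _ ≤ ∑ j ∈ L.image lvl, ENNReal.ofReal (2 ^ j) * volume (E j) :=
        Finset.sum_le_sum fun j _ => sum_le_zpow_mul_volume_of_level hτ h
          (fun I hI => hL I (Finset.filter_subset _ _ hI)) fun I hI => (Finset.mem_filter.1 hI).2
    _ = ∫⁻ t in Set.Icc (0 : ℝ) 1,
          ∑ j ∈ L.image lvl, (E j).indicator (fun _ => ENNReal.ofReal (2 ^ j)) t := by
        rw [lintegral_finsetSum _ fun j _ => measurable_const.indicator (hEmeas j)]
        refine Finset.sum_congr rfl fun j _ => ?_
        rw [lintegral_indicator_const (hEmeas j), Measure.restrict_apply (hEmeas j),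
          Set.inter_eq_left.2 (hE j), mul_comm]
    _ ≤ ∫⁻ t in Set.Icc (0 : ℝ) 1, 2 * muSet τ L t := lintegral_mono hlayer
    _ = 2 * ∫⁻ t in Set.Icc (0 : ℝ) 1, muSet τ L t := lintegral_const_mul' _ _ ENNReal.ofNat_ne_top

theorem bmoSq_sSigma_le_two_mul_cone (hτ : Function.Injective τ) (h : bmoSq s a ≤ 1) :
    bmoSq (sSigmaSupp τ s) (sSigmaCoef τ s a) ≤ 2 * Cone τ := by
  refine iSup_le fun K => ?_
  set L := (sSigmaSupp τ s).filter (fun J => J.toSet ⊆ K.toSet)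
  have hL : ∀ I ∈ L, τ I ∈ s := fun I hI => (mem_sSigmaSupp hτ).1 (Finset.mem_filter.1 hI).1
  have hLK : volume (pointSet L) ≤ volume K.toSet :=
    measure_mono (Set.iUnion₂_subset fun I hI => (Finset.mem_filter.1 hI).2)
  have hsum : ∑ J ∈ L, sSigmaCoef τ s a J ^ 2 * J.len = ∑ I ∈ L, a (τ I) ^ 2 * I.len :=
    Finset.sum_congr rfl fun I hI => by rw [sSigmaCoef, if_pos (hL I hI)]
  rw [hsum, ENNReal.ofReal_div_of_pos K.len_pos, ← volume_toSet,
    ENNReal.ofReal_sum_of_nonneg fun I _ => mul_nonneg (sq_nonneg _) I.len_pos.le]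
  refine ENNReal.div_le_of_le_mul ?_
  calc ∑ I ∈ L, ENNReal.ofReal (a (τ I) ^ 2 * I.len)
      ≤ 2 * ∫⁻ t in Set.Icc (0 : ℝ) 1, muSet τ L t := sum_le_two_mul_lintegral_muSet hτ h hL
    _ ≤ 2 * (Cone τ * volume K.toSet) :=
        mul_le_mul_right ((lintegral_muSet_le_cone_mul τ L).trans (mul_le_mul_right hLK _)) _
    _ = 2 * Cone τ * volume K.toSet := (mul_assoc _ _ _).symm

end Rearrangement

/-- There is an absolute constant `A > 0` such that for every
injective `τ : D → D` (with inverse `σ = τ⁻¹` on `τ(D)`), `‖S_σ‖_{BMO}² ≤ A · C₁`. -/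
theorem statement4 :
    ∃ A : ℝ, 0 < A ∧
      ∀ (τ : DyadicI → DyadicI), Function.Injective τ →
        bmoOpNorm τ ^ 2 ≤ ENNReal.ofReal A * Cone τ := by
  refine ⟨2, two_pos, fun τ hτ => ?_⟩
  have hnorm : bmoOpNorm τ ≤ (2 * Cone τ) ^ (1 / 2 : ℝ) :=
    iSup_le fun s => iSup_le fun a => iSup_le fun h =>
      ENNReal.rpow_le_rpow (bmoSq_sSigma_le_two_mul_cone hτ h) (by norm_num)
  calc bmoOpNorm τ ^ 2 ≤ ((2 * Cone τ) ^ (1 / 2 : ℝ)) ^ 2 := pow_le_pow_left' hnorm 2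
    _ = ENNReal.ofReal 2 * Cone τ := by
        rw [← ENNReal.rpow_natCast, ← ENNReal.rpow_mul, ENNReal.ofReal_ofNat]
        norm_num
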